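/- For a positive integer n, define f_i : S_n → ℝ for 1 ≤ i ≤ n by f_i(σ) = cos(π(σ^{-1}(i) − 1/2)/n). Then Σ_{σ ∈ S_n} f_i(σ)² = n!/2 for each i, and Σ_{σ ∈ S_n} f_i(σ)·f_j(σ) = −n!/(2(n−1)) for i ≠ j (with n ≥ 2). -/

import Mathlib

/-!
`f_i(σ) = c (σ⁻¹ i)` for the Chebyshev nodes `c k = cos (π (k + 1/2) / n)`, `k = 0, …, n - 1`.
They satisfy `∑ c k = 0`, since `k ↦ n - 1 - k` negates them, and `∑ c k ^ 2 = n / 2`, since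
`cos² x = (1 + cos 2x) / 2` and the `cos ((2k + 1) π / n)` are the real parts of a rotated full sum
of `n`-th roots of unity. As `S_n` is `2`-transitive, `∑_σ F (σ i) G (σ j)` is the same for all
pairs `i ≠ j`; summing it over all ordered pairs `(i, j)` and splitting off the diagonal evaluates
`n (n - 1)` times it as `n! ((∑ F) (∑ G) - ∑ F G)`.
-/

open Finset Equiv Real Fintype Nat

/-- `f_i(σ) = cos(π(σ⁻¹(i) − 1/2)/n)`, where positions are numbered `1, …, n`. -/
noncomputable def permEig (n : ℕ) (i : Fin n) (σ : Equiv.Perm (Fin n)) : ℝ :=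
  Real.cos (Real.pi * (((σ⁻¹ i : Fin n) : ℕ) + 1 - 1 / 2) / n)

noncomputable def chebyshevNode (n : ℕ) (k : Fin n) : ℝ :=
  cos (π * ((k : ℕ) + 1 - 1 / 2) / n)

theorem permEig_eq_chebyshevNode (n : ℕ) (i : Fin n) (σ : Perm (Fin n)) :
    permEig n i σ = chebyshevNode n (σ⁻¹ i) :=
  rfl

theorem chebyshevNode_rev (n : ℕ) (k : Fin n) : chebyshevNode n k.rev = -chebyshevNode n k := by
  have hn : (n : ℝ) ≠ 0 := Nat.cast_ne_zero.mpr k.pos.ne'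
  have hk : ((k.rev : ℕ) : ℝ) = n - 1 - k := by
    rw [Fin.val_rev, Nat.cast_sub k.2]
    push_cast
    ring
  rw [chebyshevNode, chebyshevNode, hk, ← cos_pi_sub]
  congr 1
  field_simp
  ring

theorem sum_chebyshevNode (n : ℕ) : ∑ k, chebyshevNode n k = 0 := by
  have h := Equiv.sum_comp Fin.revPerm (chebyshevNode n)
  simp only [Fin.revPerm_apply, chebyshevNode_rev, Finset.sum_neg_distrib] at h
  linarith

theorem sum_range_cos_odd_mul_pi_div {n : ℕ} (hn : 2 ≤ n) :
    ∑ k ∈ range n, cos (π * (2 * k + 1) / n) = 0 := by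
  have hn0 : n ≠ 0 := by omega
  set ζ : ℂ := Complex.exp (2 * π * Complex.I / n)
  have hζ : IsPrimitiveRoot ζ n := Complex.isPrimitiveRoot_exp n hn0
  have hterm (k : ℕ) : Complex.exp ((π * (2 * k + 1) / n : ℝ) * Complex.I) =
      Complex.exp (π * Complex.I / n) * ζ ^ k := by
    rw [← Complex.exp_nat_mul, ← Complex.exp_add]
    congr 1
    push_cast
    field_simp
    ring
  calc ∑ k ∈ range n, cos (π * (2 * k + 1) / n)
      = (∑ k ∈ range n, Complex.exp ((π * (2 * k + 1) / n : ℝ) * Complex.I)).re := by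
        simp only [Complex.re_sum, Complex.exp_ofReal_mul_I_re]
    _ = 0 := by
        rw [Finset.sum_congr rfl fun k _ => hterm k, ← Finset.mul_sum,
          hζ.geom_sum_eq_zero (by omega), mul_zero, Complex.zero_re]

theorem sum_chebyshevNode_sq {n : ℕ} (hn : 2 ≤ n) : ∑ k, chebyshevNode n k ^ 2 = n / 2 := by
  have hsq (k : Fin n) : chebyshevNode n k ^ 2 = 1 / 2 + cos (π * (2 * (k : ℕ) + 1) / n) / 2 := by
    rw [chebyshevNode, cos_sq]
    ring_nf
  simp only [hsq, Finset.sum_add_distrib, ← Finset.sum_div, Fin.sum_univ_eq_sum_range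
    (fun k => cos (π * (2 * k + 1) / n)), sum_range_cos_odd_mul_pi_div hn]
  simp

section PermSums

variable {α : Type*} [Fintype α] [DecidableEq α]

theorem sum_perm_apply_apply_perm {M : Type*} [AddCommMonoid M] (h : α → α → M)
    (p : Perm α) (i j : α) :
    ∑ σ : Perm α, h (σ (p i)) (σ (p j)) = ∑ σ : Perm α, h (σ i) (σ j) :=
  Equiv.sum_comp (Equiv.mulRight p) fun σ => h (σ i) (σ j)

theorem sum_sum_perm_apply {M : Type*} [AddCommMonoid M] (F : α → M) :
    ∑ a, ∑ σ : Perm α, F (σ a) = (card α)! • ∑ k, F k := by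
  rw [Finset.sum_comm]
  simp [Equiv.sum_comp, Fintype.card_perm]

theorem card_mul_sum_perm_apply {R : Type*} [CommSemiring R] (F : α → R) (i : α) :
    (card α : R) * ∑ σ : Perm α, F (σ i) = (card α)! * ∑ k, F k := by
  have hconst (j : α) : ∑ σ : Perm α, F (σ j) = ∑ σ : Perm α, F (σ i) := by
    simpa using sum_perm_apply_apply_perm (fun a _ => F a) (swap i j) i i
  calc (card α : R) * ∑ σ : Perm α, F (σ i) = ∑ j, ∑ σ : Perm α, F (σ j) := by simp [hconst]
    _ = (card α)! * ∑ k, F k := by rw [sum_sum_perm_apply, nsmul_eq_mul]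

theorem card_mul_card_sub_one_mul_sum_perm_apply_mul_apply {R : Type*} [CommRing R]
    (F G : α → R) {i j : α} (hij : i ≠ j) :
    (card α : R) * (card α - 1) * ∑ σ : Perm α, F (σ i) * G (σ j) =
      (card α)! * ((∑ k, F k) * (∑ k, G k) - ∑ k, F k * G k) := by
  set c := ∑ σ : Perm α, F (σ i) * G (σ j)
  have hconst {a b : α} (hab : a ≠ b) : ∑ σ : Perm α, F (σ a) * G (σ b) = c := by
    obtain ⟨p, hpa, hpb⟩ :=
      MulAction.is_two_pretransitive_iff.mp (Perm.isMultiplyPretransitive α 2) hij hab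
    rw [← hpa, ← hpb]
    exact sum_perm_apply_apply_perm (fun x y => F x * G y) p i j
  have hrow (a : α) : ∑ b, ∑ σ : Perm α, F (σ a) * G (σ b) =
      ∑ σ : Perm α, F (σ a) * G (σ a) + (card α - 1) * c := by
    rw [← Finset.add_sum_erase _ _ (mem_univ a), Finset.sum_congr rfl fun b hb =>
      hconst (Finset.ne_of_mem_erase hb).symm]
    simp [Finset.card_erase_of_mem, Nat.cast_sub (card_pos_iff.mpr ⟨a⟩)]
  have htotal : ∑ a, ∑ b, ∑ σ : Perm α, F (σ a) * G (σ b) =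
      (card α)! * ((∑ k, F k) * (∑ k, G k)) := by
    calc ∑ a, ∑ b, ∑ σ : Perm α, F (σ a) * G (σ b)
        = ∑ a, ∑ σ : Perm α, ∑ b, F (σ a) * G (σ b) :=
          Finset.sum_congr rfl fun a _ => Finset.sum_comm
      _ = ∑ σ : Perm α, ∑ a, ∑ b, F (σ a) * G (σ b) := Finset.sum_comm
      _ = ∑ σ : Perm α, (∑ a, F (σ a)) * ∑ b, G (σ b) := by simp only [Finset.sum_mul_sum]
      _ = _ := by simp [Equiv.sum_comp, Fintype.card_perm]
  have hdiag := sum_sum_perm_apply (fun k => F k * G k)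
  simp only [hrow, Finset.sum_add_distrib, hdiag, Finset.sum_const, Finset.card_univ,
    nsmul_eq_mul] at htotal
  linear_combination htotal

end PermSums

theorem permEig_inner_products (n : ℕ) (hn : 2 ≤ n) :
    (∀ i : Fin n, ∑ σ : Equiv.Perm (Fin n), permEig n i σ ^ 2 = (n.factorial : ℝ) / 2) ∧
    ∀ i j : Fin n, i ≠ j →
      ∑ σ : Equiv.Perm (Fin n), permEig n i σ * permEig n j σ =
        -(n.factorial : ℝ) / (2 * ((n : ℝ) - 1)) := by
  have hn0 : (n : ℝ) ≠ 0 := by positivity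
  have hn1 : (n : ℝ) - 1 ≠ 0 := by
    rw [sub_ne_zero, Nat.cast_ne_one]
    omega
  have hinv (F : Perm (Fin n) → ℝ) : ∑ σ, F σ⁻¹ = ∑ σ, F σ := Equiv.sum_comp (Equiv.inv _) F
  simp only [permEig_eq_chebyshevNode]
  refine ⟨fun i => ?_, fun i j hij => ?_⟩
  · have h := card_mul_sum_perm_apply (fun k => chebyshevNode n k ^ 2) i
    rw [Fintype.card_fin, sum_chebyshevNode_sq hn] at h
    rw [hinv fun σ => chebyshevNode n (σ i) ^ 2]
    apply mul_left_cancel₀ hn0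
    rw [h]
    ring
  · have h := card_mul_card_sub_one_mul_sum_perm_apply_mul_apply
      (chebyshevNode n) (chebyshevNode n) hij
    simp only [Fintype.card_fin, sum_chebyshevNode, ← sq, sum_chebyshevNode_sq hn] at h
    rw [hinv fun σ => chebyshevNode n (σ i) * chebyshevNode n (σ j)]
    apply mul_left_cancel₀ (mul_ne_zero hn0 hn1)
    rw [h]
    field_simp
    ring
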